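/- If H²(G/N, N) = 1 (with the conjugation action), then every θ ∈ Aut(N) commuting with the G/N-action on N extends to an automorphism of G inducing the identity on G/N, and every φ ∈ Aut(G/N) preserving the action on N lifts to an automorphism of G fixing N elementwise. -/

import Mathlib

/-!
Write `g ∈ G` uniquely as `t x * n` with `x ∈ G ⧸ N`, `n ∈ N`; then
`(t x * a) * (t y * b) = t (x * y) * (f x y * a ^ y * b)`, where `f` is the factor set of `t` and
`a ^ y` the action through `t`. Both parts are handled at once: for `φ ∈ C₂` and `ψ ∈ C₁`, the
bijection `t x * n ↦ t (φ x) * (χ x * ψ n)` is multiplicative as soon as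
`ψ (f x y) / f (φ x) (φ y) = χ x ^ y * χ y / χ (x * y)`. The left side is a normalized 2-cocycle
(here the compatibility of `φ` and `ψ` with the action and the commutativity of `N` enter), so
`H² = 1` provides `χ`. Part one is `φ = id`, part two is `ψ = id`.
-/

open scoped IsMulCommutative

namespace QuotientGroup

variable {G : Type*} [Group G] {N : Subgroup G} [N.Normal] (t : G ⧸ N → G)

def transversalConj (z : G ⧸ N) : N →* N where
  toFun n := ⟨(t z)⁻¹ * n * t z, by simpa using ‹N.Normal›.conj_mem n n.2 (t z)⁻¹⟩
  map_one' := by ext; simp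
  map_mul' a b := by ext; simp [mul_assoc]

@[simp]
lemma coe_transversalConj (z : G ⧸ N) (n : N) :
    (transversalConj t z n : G) = (t z)⁻¹ * n * t z := rfl

/-- `H²(G ⧸ N, N) = 1` for the action `transversalConj t`, in terms of normalized cochains. -/
def H2Trivial : Prop :=
  ∀ k : G ⧸ N → G ⧸ N → N,
    (∀ x : G ⧸ N, k x 1 = 1 ∧ k 1 x = 1) →
    (∀ x y z : G ⧸ N,
      (k (x * y) z : G) * ((t z)⁻¹ * (k x y : G) * t z) = (k x (y * z) : G) * (k y z : G)) →
    ∃ χ : G ⧸ N → N, χ 1 = 1 ∧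
      ∀ x y : G ⧸ N, (k x y : G) = ((t y)⁻¹ * (χ x : G) * t y) * (χ y : G) * ((χ (x * y) : G))⁻¹

variable {t} (ht : ∀ x : G ⧸ N, (t x : G ⧸ N) = x)

def factorSet (x y : G ⧸ N) : N :=
  ⟨(t (x * y))⁻¹ * t x * t y, by rw [← eq_one_iff]; simp [ht]⟩

@[simp]
lemma coe_factorSet (x y : G ⧸ N) : (factorSet ht x y : G) = (t (x * y))⁻¹ * t x * t y := rfl

lemma factorSet_mul_transversalConj (x y z : G ⧸ N) :
    factorSet ht (x * y) z * transversalConj t z (factorSet ht x y) =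
      factorSet ht x (y * z) * factorSet ht y z := by
  ext
  simp [mul_assoc]

lemma factorSet_one_left (ht1 : t 1 = 1) (x : G ⧸ N) : factorSet ht 1 x = 1 := by
  ext; simp [ht1]

lemma factorSet_one_right (ht1 : t 1 = 1) (x : G ⧸ N) : factorSet ht x 1 = 1 := by
  ext; simp [ht1]

def transversalEquiv : G ≃ (G ⧸ N) × N where
  toFun g := (g, ⟨(t g)⁻¹ * g, by rw [← eq_one_iff]; simp [ht]⟩)
  invFun p := t p.1 * p.2
  left_inv g := mul_inv_cancel_left _ _
  right_inv p := by
    have hx : ((t p.1 * p.2 : G) : G ⧸ N) = p.1 := by simp [ht]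
    ext
    · exact hx
    · simp [hx]

lemma transversalEquiv_symm_apply (p : (G ⧸ N) × N) :
    (transversalEquiv ht).symm p = t p.1 * p.2 := rfl

lemma transversal_mul_mul_transversal_mul (x y : G ⧸ N) (a b : N) :
    t x * a * (t y * b) =
      t (x * y) * ↑(factorSet ht x y * transversalConj t y a * b) := by
  simp [mul_assoc]

variable (φ : G ⧸ N ≃* G ⧸ N) (ψ : N ≃* N)

def twistedFactorSet (x y : G ⧸ N) : N :=
  ψ (factorSet ht x y) / factorSet ht (φ x) (φ y)

lemma twistedFactorSet_one_left (ht1 : t 1 = 1) (x : G ⧸ N) :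
    twistedFactorSet ht φ ψ 1 x = 1 := by
  simp [twistedFactorSet, factorSet_one_left ht ht1]

lemma twistedFactorSet_one_right (ht1 : t 1 = 1) (x : G ⧸ N) :
    twistedFactorSet ht φ ψ x 1 = 1 := by
  simp [twistedFactorSet, factorSet_one_right ht ht1]

lemma twistedFactorSet_mul_transversalConj [IsMulCommutative N]
    (hφ : ∀ x, transversalConj t (φ x) = transversalConj t x)
    (hψ : ∀ x n, ψ (transversalConj t x n) = transversalConj t x (ψ n)) (x y z : G ⧸ N) :
    twistedFactorSet ht φ ψ (x * y) z * transversalConj t z (twistedFactorSet ht φ ψ x y) =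
      twistedFactorSet ht φ ψ x (y * z) * twistedFactorSet ht φ ψ y z := by
  have hf := factorSet_mul_transversalConj ht x y z
  have hfφ := factorSet_mul_transversalConj ht (φ x) (φ y) (φ z)
  rw [← map_mul, ← map_mul, hφ] at hfφ
  unfold twistedFactorSet
  rw [map_div, ← hψ, div_mul_div_comm, ← map_mul, hf, hfφ, map_mul ψ, div_mul_div_comm]

variable (χ : G ⧸ N → N)

def twistEquiv : G ≃ G :=
  (transversalEquiv ht).trans <|
    (Equiv.prodShear φ.toEquiv fun x => ψ.toEquiv.trans (Equiv.mulLeft (χ x))).trans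
      (transversalEquiv ht).symm

lemma twistEquiv_transversal_mul (x : G ⧸ N) (a : N) :
    twistEquiv ht φ ψ χ (t x * a) = t (φ x) * ↑(χ x * ψ a) := by
  have hxa : transversalEquiv ht (t x * a) = (x, a) := (transversalEquiv ht).apply_symm_apply (x, a)
  simp [twistEquiv, hxa, transversalEquiv_symm_apply]

lemma twistEquiv_mul [IsMulCommutative N]
    (hφ : ∀ x, transversalConj t (φ x) = transversalConj t x)
    (hψ : ∀ x n, ψ (transversalConj t x n) = transversalConj t x (ψ n))
    (hχ : ∀ x y, χ (x * y) * ψ (factorSet ht x y) =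
      factorSet ht (φ x) (φ y) * transversalConj t y (χ x) * χ y) (g h : G) :
    twistEquiv ht φ ψ χ (g * h) = twistEquiv ht φ ψ χ g * twistEquiv ht φ ψ χ h := by
  obtain ⟨⟨x, a⟩, rfl⟩ := (transversalEquiv ht).symm.surjective g
  obtain ⟨⟨y, b⟩, rfl⟩ := (transversalEquiv ht).symm.surjective h
  simp only [transversalEquiv_symm_apply]
  rw [transversal_mul_mul_transversal_mul ht, twistEquiv_transversal_mul,
    twistEquiv_transversal_mul, twistEquiv_transversal_mul,
    transversal_mul_mul_transversal_mul ht, map_mul φ]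
  congr 2
  rw [hφ, map_mul, map_mul, map_mul, hψ, ← mul_assoc (χ (x * y)), ← mul_assoc (χ (x * y)), hχ]
  ac_rfl

lemma twistEquiv_apply_coe (ht1 : t 1 = 1) (hχ : χ 1 = 1) (n : N) :
    twistEquiv ht φ ψ χ n = ψ n := by
  simpa [ht1, hχ] using twistEquiv_transversal_mul ht φ ψ χ 1 n

lemma mk_twistEquiv (g : G) : (twistEquiv ht φ ψ χ g : G ⧸ N) = φ g := by
  obtain ⟨⟨x, a⟩, rfl⟩ := (transversalEquiv ht).symm.surjective g
  simp [transversalEquiv_symm_apply, twistEquiv_transversal_mul, ht]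

end QuotientGroup

open QuotientGroup in
theorem exists_mulEquiv_lift_of_h2Trivial {G : Type*} [Group G] {N : Subgroup G} [N.Normal]
    [IsMulCommutative N] {t : G ⧸ N → G} (ht : ∀ x : G ⧸ N, (t x : G ⧸ N) = x) (ht1 : t 1 = 1)
    (hH2 : H2Trivial t) (φ : G ⧸ N ≃* G ⧸ N) (ψ : N ≃* N)
    (hφ : ∀ x, transversalConj t (φ x) = transversalConj t x)
    (hψ : ∀ x n, ψ (transversalConj t x n) = transversalConj t x (ψ n)) :
    ∃ γ : G ≃* G, (∀ n : N, γ n = ψ n) ∧ ∀ g, (γ g : G ⧸ N) = φ g := by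
  obtain ⟨χ, hχ1, hχ⟩ := hH2 (twistedFactorSet ht φ ψ)
    (fun x => ⟨twistedFactorSet_one_right ht φ ψ ht1 x, twistedFactorSet_one_left ht φ ψ ht1 x⟩)
    (fun x y z => by
      simpa using congrArg Subtype.val (twistedFactorSet_mul_transversalConj ht φ ψ hφ hψ x y z))
  have hE : ∀ x y, χ (x * y) * ψ (factorSet ht x y) =
      factorSet ht (φ x) (φ y) * transversalConj t y (χ x) * χ y := by
    intro x y
    have h : twistedFactorSet ht φ ψ x y = transversalConj t y (χ x) * χ y / χ (x * y) := by
      ext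
      simpa [div_eq_mul_inv] using hχ x y
    rw [twistedFactorSet, div_eq_div_iff_mul_eq_mul] at h
    rw [mul_comm, h, mul_comm, ← mul_assoc]
  exact ⟨MulEquiv.mk' _ (twistEquiv_mul ht φ ψ χ hφ hψ hE), twistEquiv_apply_coe ht φ ψ χ ht1 hχ1,
    mk_twistEquiv ht φ ψ χ⟩

/-- If H²(G/N, N) = 1 (every normalized 2-cocycle for the
conjugation action is a coboundary), then every θ ∈ C₁ extends to an automorphism
of G inducing the identity on G/N, and every φ ∈ C₂ lifts to an automorphism of G
fixing N elementwise. -/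
theorem stmt_12 {G : Type*} [Group G] (N : Subgroup G) [N.Normal]
    (hcomm : ∀ a b : N, a * b = b * a)
    (t : G ⧸ N → G) (ht : ∀ x : G ⧸ N, (QuotientGroup.mk (t x) : G ⧸ N) = x)
    (ht1 : t 1 = 1)
    (hH2 : ∀ k : G ⧸ N → G ⧸ N → N,
      (∀ x : G ⧸ N, k x 1 = 1 ∧ k 1 x = 1) →
      (∀ x y z : G ⧸ N,
        (k (x * y) z : G) * ((t z)⁻¹ * (k x y : G) * t z) =
          (k x (y * z) : G) * (k y z : G)) →
      ∃ χ : G ⧸ N → N, χ 1 = 1 ∧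
        ∀ x y : G ⧸ N,
          (k x y : G) =
            ((t y)⁻¹ * (χ x : G) * t y) * (χ y : G) * ((χ (x * y) : G))⁻¹) :
    (∀ θ : N ≃* N,
      (∀ (n m : N) (x : G ⧸ N),
        (n : G) = (t x)⁻¹ * (m : G) * t x →
          (θ n : G) = (t x)⁻¹ * (θ m : G) * t x) →
      ∃ γ : G ≃* G,
        (∀ n : N, γ n = (θ n : G)) ∧
        (∀ g : G, (QuotientGroup.mk (γ g) : G ⧸ N) = QuotientGroup.mk g)) ∧
    (∀ φ : G ⧸ N ≃* G ⧸ N,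
      (∀ (n : N) (x : G ⧸ N),
        (t (φ x))⁻¹ * (n : G) * t (φ x) = (t x)⁻¹ * (n : G) * t x) →
      ∃ γ : G ≃* G,
        (∀ n ∈ N, γ n = n) ∧
        (∀ g : G, (QuotientGroup.mk (γ g) : G ⧸ N) = φ (QuotientGroup.mk g))) := by
  have : IsMulCommutative N := isMulCommutative_iff.mpr hcomm
  refine ⟨fun θ hθ => ?_, fun φ hφ => ?_⟩
  · exact exists_mulEquiv_lift_of_h2Trivial ht ht1 hH2 (MulEquiv.refl _) θ (fun _ => rfl)
      (fun x n => Subtype.ext (hθ _ n x rfl))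
  · obtain ⟨γ, hγN, hγ⟩ := exists_mulEquiv_lift_of_h2Trivial ht ht1 hH2 φ (MulEquiv.refl N)
      (fun x => MonoidHom.ext fun n => Subtype.ext (hφ n x)) (fun _ _ => rfl)
    exact ⟨γ, fun n hn => hγN ⟨n, hn⟩, hγ⟩
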